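/- Let Γ be a finite connected induced subgraph of the triangular grid, let R ⊆ V be a geodesically convex region of Γ, let q ∈ {x,y,z}, let P be a q-portal of the induced subgraph Γ|_R, and let C be a connected component of the subgraph of Γ induced on R∖P. Then C ∪ P is geodesically convex in Γ (i.e., splitting a geodesically convex region at a portal yields geodesically convex regions). -/

import Mathlib

/-!
Suppose a shortest walk `p` between two points of `C ∪ P` passes through `w ∉ C ∪ P`. By
convexity `p` stays in `R`, and since `C` is a component of `R \ P`, `p` meets `P` at some `a`
before `w` and some `b` after `w`. A portal is a straight segment `a + [0, k] • e` inside `R`, so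
`a` and `b` are joined in `V` by a walk of length `|k|`, and the piece of `p` from `a` through `w`
to `b` is no longer. In the hexagonal norm, which a single step changes by at most one, the
straight segment is the only route of that length, so `w` lies on it and hence in `P`.
-/

open SimpleGraph

/-- The infinite triangular grid graph on `ℤ × ℤ`. -/
def triGrid : SimpleGraph (ℤ × ℤ) where
  Adj u v := u - v = (1, 0) ∨ u - v = (-1, 0) ∨ u - v = (0, 1) ∨ u - v = (0, -1) ∨
    u - v = (1, -1) ∨ u - v = (-1, 1)
  symm := by
    constructor
    intro u v h
    have hvu : v - u = -(u - v) := by ring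
    rcases h with h | h | h | h | h | h <;> rw [hvu, h] <;> simp [Prod.ext_iff]
  loopless := by
    constructor
    intro u h
    simp [Prod.ext_iff] at h

/-- A finite set is hole-free (simple) if every connected component of the complement
is infinite, i.e., there are no inner holes. -/
def HoleFree (S : Set (ℤ × ℤ)) : Prop :=
  ∀ C : (triGrid.induce Sᶜ).ConnectedComponent, C.supp.Infinite

/-- The graph on `V` whose edges are the edges of the induced grid graph in direction `±e`. -/
def portalLineGraph (V : Set (ℤ × ℤ)) (e : ℤ × ℤ) : SimpleGraph V where
  Adj u v := triGrid.Adj u v ∧ ((u : ℤ × ℤ) - v = e ∨ (v : ℤ × ℤ) - u = e)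
  symm := ⟨fun u v ⟨h, h'⟩ => ⟨h.symm, h'.symm⟩⟩
  loopless := ⟨fun u ⟨h, _⟩ => triGrid.loopless.irrefl u h⟩

/-- The `e`-portals of the induced subgraph on `V`: connected components of `portalLineGraph`. -/
abbrev Portal (V : Set (ℤ × ℤ)) (e : ℤ × ℤ) := (portalLineGraph V e).ConnectedComponent

/-- The portal containing a given vertex. -/
def portalMk (V : Set (ℤ × ℤ)) (e : ℤ × ℤ) (u : V) : Portal V e :=
  (portalLineGraph V e).connectedComponentMk u

/-- The `e`-portal graph: vertices are the `e`-portals, two portals being adjacent iff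
some edge of the induced grid graph joins them. -/
def portalGraph (V : Set (ℤ × ℤ)) (e : ℤ × ℤ) : SimpleGraph (Portal V e) where
  Adj P Q := P ≠ Q ∧ ∃ u v : V, (triGrid.induce V).Adj u v ∧
    portalMk V e u = P ∧ portalMk V e v = Q
  symm := ⟨fun P Q ⟨hne, u, v, h, hu, hv⟩ => ⟨hne.symm, v, u, h.symm, hv, hu⟩⟩
  loopless := ⟨fun P h => h.1 rfl⟩

/-- Distance between the portals of `u` and `v` in the `e`-portal graph. -/
noncomputable def portalDist (V : Set (ℤ × ℤ)) (e : ℤ × ℤ) (u v : V) : ℕ :=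
  (portalGraph V e).dist (portalMk V e u) (portalMk V e v)

/-- A set `P` is an `e`-portal of the induced subgraph on `V` (as a set of grid points). -/
def IsPortal (V : Set (ℤ × ℤ)) (e : ℤ × ℤ) (P : Set (ℤ × ℤ)) : Prop :=
  ∃ C : Portal V e, P = Subtype.val '' C.supp

/-- `R` is geodesically convex in the subgraph induced on `V`: for all `u, v ∈ R`,
every shortest `u`–`v` path in the induced graph stays inside `R`. -/
def GeodesicallyConvex (V R : Set (ℤ × ℤ)) : Prop :=
  ∀ u v : V, (u : ℤ × ℤ) ∈ R → (v : ℤ × ℤ) ∈ R →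
    ∀ p : (triGrid.induce V).Walk u v, p.length = (triGrid.induce V).dist u v →
      ∀ w ∈ p.support, (w : ℤ × ℤ) ∈ R

/-- Twice the graph distance of `triGrid` (hexagonal cube coordinates `x`, `y`, `x + y`). -/
def twiceGridDist (x y : ℤ × ℤ) : ℕ :=
  (x.1 - y.1).natAbs + (x.2 - y.2).natAbs + (x.1 + x.2 - y.1 - y.2).natAbs

lemma twiceGridDist_le_of_adj {x y : ℤ × ℤ} (z : ℤ × ℤ) (h : triGrid.Adj x y) :
    twiceGridDist x z ≤ twiceGridDist y z + 2 := by
  rcases h with h | h | h | h | h | h <;>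
    · simp only [Prod.ext_iff, Prod.fst_sub, Prod.snd_sub] at h
      simp only [twiceGridDist]
      omega

lemma twiceGridDist_le_length {V : Set (ℤ × ℤ)} {u v : V} (q : (triGrid.induce V).Walk u v) :
    twiceGridDist u v ≤ 2 * q.length := by
  induction q with
  | nil => simp [twiceGridDist]
  | @cons _ _ z h q ih =>
    have := twiceGridDist_le_of_adj z (induce_adj.mp h)
    rw [Walk.length_cons]
    omega

lemma triGrid_adj_add {e : ℤ × ℤ} (he : e ∈ ({(1, 0), (0, 1), (1, -1)} : Set (ℤ × ℤ)))
    (t : ℤ × ℤ) : triGrid.Adj t (t + e) := by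
  rcases he with rfl | rfl | rfl <;> simp [triGrid, Prod.ext_iff]

lemma eq_add_smul_of_twiceGridDist_le {e : ℤ × ℤ}
    (he : e ∈ ({(1, 0), (0, 1), (1, -1)} : Set (ℤ × ℤ))) {a w : ℤ × ℤ} {k : ℤ}
    (h : twiceGridDist a w + twiceGridDist w (a + k • e) ≤ twiceGridDist a (a + k • e)) :
    ∃ j ∈ Set.uIcc 0 k, w = a + j • e := by
  simp only [twiceGridDist, Set.mem_uIcc, Prod.ext_iff, Prod.fst_add, Prod.snd_add,
    Prod.smul_fst, Prod.smul_snd, smul_eq_mul] at h ⊢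
  rcases he with rfl | rfl | rfl
  · exact ⟨w.1 - a.1, by omega, by omega, by omega⟩
  · exact ⟨w.2 - a.2, by omega, by omega, by omega⟩
  · exact ⟨w.1 - a.1, by omega, by omega, by omega⟩

lemma twiceGridDist_add_smul {e : ℤ × ℤ} (he : e ∈ ({(1, 0), (0, 1), (1, -1)} : Set (ℤ × ℤ)))
    (a : ℤ × ℤ) (k : ℤ) : twiceGridDist a (a + k • e) = 2 * k.natAbs := by
  rcases he with rfl | rfl | rfl <;> simp [twiceGridDist] <;> omega

lemma SimpleGraph.Walk.length_le_of_length_append_eq_dist {α : Type*} {G : SimpleGraph α}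
    {u a b v : α} (p₁ : G.Walk u a) (q r : G.Walk a b) (p₂ : G.Walk b v)
    (hp : (p₁.append (q.append p₂)).length = G.dist u v) : q.length ≤ r.length := by
  have := G.dist_le (p₁.append (r.append p₂))
  simp only [Walk.length_append] at hp this
  omega

lemma SimpleGraph.Walk.exists_mem_support_of_exit {α : Type*} {G : SimpleGraph α}
    {V R P : Set α} (D : (G.induce (R \ P)).ConnectedComponent) {s t : V}
    (q : (G.induce V).Walk s t) (hq : ∀ x ∈ q.support, (x : α) ∈ R)
    (hs : (s : α) ∈ Subtype.val '' D.supp ∪ P) (ht : (t : α) ∉ Subtype.val '' D.supp ∪ P) :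
    ∃ x ∈ q.support, (x : α) ∈ P := by
  induction q with
  | nil => exact absurd hs ht
  | @cons s x t h q ih =>
    rcases hs with ⟨s', hs'D, hs's⟩ | hsP
    · by_cases hxP : (x : α) ∈ P
      · exact ⟨x, by simp, hxP⟩
      · have hadj : (G.induce (R \ P)).Adj s' ⟨x, hq x (by simp), hxP⟩ := by
          simpa [hs's] using h
        obtain ⟨y, hy, hyP⟩ := ih (fun y hy => hq y (by simp [hy]))
          (Or.inl ⟨_, D.mem_supp_of_adj_mem_supp hs'D hadj, rfl⟩) ht
        exact ⟨y, by simp [hy], hyP⟩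
    · exact ⟨s, by simp, hsP⟩

lemma exists_walk_length_natAbs {S : Set (ℤ × ℤ)} {e : ℤ × ℤ} (G : SimpleGraph S)
    (hG : ∀ x y : S, (y : ℤ × ℤ) = x + e → G.Adj x y) {a b : S} {k : ℤ}
    (hb : (b : ℤ × ℤ) = a + k • e) (hseg : ∀ j ∈ Set.uIcc 0 k, (a : ℤ × ℤ) + j • e ∈ S) :
    ∃ r : G.Walk a b, r.length = k.natAbs := by
  have forward : ∀ (n : ℕ) (c d : S), (d : ℤ × ℤ) = c + (n : ℤ) • e →
      (∀ j ∈ Set.uIcc 0 (n : ℤ), (c : ℤ × ℤ) + j • e ∈ S) → ∃ r : G.Walk c d, r.length = n := by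
    intro n
    induction n with
    | zero =>
      intro c d hd _
      obtain rfl : d = c := Subtype.ext (by simpa using hd)
      exact ⟨Walk.nil, rfl⟩
    | succ n ih =>
      intro c d hd hseg
      have hmid := hseg n (by simp [Set.mem_uIcc])
      obtain ⟨r, hr⟩ := ih c ⟨_, hmid⟩ rfl fun j hj =>
        hseg j (by simp [Set.mem_uIcc] at hj ⊢; omega)
      refine ⟨r.concat (hG _ d ?_), by simp [hr]⟩
      rw [hd]
      push_cast
      module
  obtain ⟨n, rfl | rfl⟩ := Int.eq_nat_or_neg k
  · exact forward n a b hb hseg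
  · obtain ⟨r, hr⟩ := forward n b a (by rw [hb]; module) fun j hj => by
      convert hseg (-n + j) (by simp at hj ⊢; omega) using 1
      rw [hb]
      module
    exact ⟨r.reverse, by simp [hr]⟩

lemma exists_eq_add_smul_of_walk {R : Set (ℤ × ℤ)} {e : ℤ × ℤ} {x a : R}
    (q : (portalLineGraph R e).Walk x a) :
    ∃ k : ℤ, (x : ℤ × ℤ) = a + k • e ∧ ∀ j ∈ Set.uIcc 0 k, (a : ℤ × ℤ) + j • e ∈ R := by
  induction q with
  | nil => exact ⟨0, by simp, fun j hj => by simp_all⟩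
  | @cons x y a h q ih =>
    obtain ⟨k, hy, hseg⟩ := ih
    have hstep : ∀ s : ℤ, s = 1 ∨ s = -1 → (x : ℤ × ℤ) = a + (k + s) • e →
        ∃ k : ℤ, (x : ℤ × ℤ) = a + k • e ∧ ∀ j ∈ Set.uIcc 0 k, (a : ℤ × ℤ) + j • e ∈ R := by
      intro s hs hx
      refine ⟨k + s, hx, fun j hj => ?_⟩
      by_cases hjk : j = k + s
      · exact hjk ▸ hx ▸ x.2
      · exact hseg j (by simp only [Set.mem_uIcc] at hj ⊢; omega)
    rcases h.2 with hxy | hxy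
    · exact hstep 1 (by simp) (by linear_combination (norm := module) hxy + hy)
    · exact hstep (-1) (by simp) (by linear_combination (norm := module) hy - hxy)

lemma portalLineGraph_reachable_iff {R : Set (ℤ × ℤ)} {e : ℤ × ℤ}
    (he : e ∈ ({(1, 0), (0, 1), (1, -1)} : Set (ℤ × ℤ))) (a b : R) :
    (portalLineGraph R e).Reachable a b ↔
      ∃ k : ℤ, (b : ℤ × ℤ) = a + k • e ∧ ∀ j ∈ Set.uIcc 0 k, (a : ℤ × ℤ) + j • e ∈ R := by
  constructor
  · rintro ⟨q⟩
    exact exists_eq_add_smul_of_walk q.reverse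
  · rintro ⟨k, hb, hseg⟩
    have hG : ∀ x y : R, (y : ℤ × ℤ) = x + e → (portalLineGraph R e).Adj x y :=
      fun x y hy => ⟨hy ▸ triGrid_adj_add he x, Or.inr (by rw [hy]; abel)⟩
    obtain ⟨r, -⟩ := exists_walk_length_natAbs _ hG hb hseg
    exact ⟨r⟩

lemma exists_walk_length_eq_of_portal_reachable {V R : Set (ℤ × ℤ)} (hRV : R ⊆ V) {e : ℤ × ℤ}
    (he : e ∈ ({(1, 0), (0, 1), (1, -1)} : Set (ℤ × ℤ))) {a b : R}
    (hab : (portalLineGraph R e).Reachable a b) :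
    ∃ r : (triGrid.induce V).Walk (Set.inclusion hRV a) (Set.inclusion hRV b),
      2 * r.length = twiceGridDist a b := by
  obtain ⟨k, hb, hseg⟩ := (portalLineGraph_reachable_iff he a b).mp hab
  obtain ⟨r, hr⟩ := exists_walk_length_natAbs (triGrid.induce V)
    (fun x y hy => induce_adj.mpr (hy ▸ triGrid_adj_add he x))
    (a := Set.inclusion hRV a) (b := Set.inclusion hRV b) hb fun j hj => hRV (hseg j hj)
  exact ⟨r, by rw [hr, hb, twiceGridDist_add_smul he]⟩

lemma mem_supp_of_twiceGridDist_le {R : Set (ℤ × ℤ)} {e : ℤ × ℤ}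
    (he : e ∈ ({(1, 0), (0, 1), (1, -1)} : Set (ℤ × ℤ))) {Q : Portal R e} {a b w : R}
    (ha : a ∈ Q.supp) (hb : b ∈ Q.supp)
    (h : twiceGridDist a w + twiceGridDist w b ≤ twiceGridDist a b) : w ∈ Q.supp := by
  obtain ⟨k, hbk, hseg⟩ :=
    (portalLineGraph_reachable_iff he a b).mp (Q.reachable_of_mem_supp ha hb)
  rw [hbk] at h
  obtain ⟨j, hj, hwj⟩ := eq_add_smul_of_twiceGridDist_le he h
  have haw : (portalLineGraph R e).Reachable a w := (portalLineGraph_reachable_iff he a w).mpr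
    ⟨j, hwj, fun i hi => hseg i (Set.uIcc_subset_uIcc Set.left_mem_uIcc hj hi)⟩
  rw [ConnectedComponent.mem_supp_iff] at ha ⊢
  rw [← ha]
  exact (ConnectedComponent.sound haw).symm

theorem split_at_portal_convex_general (V : Set (ℤ × ℤ))
    (R : Set (ℤ × ℤ)) (hRV : R ⊆ V)
    (hRconv : GeodesicallyConvex V R)
    (e : ℤ × ℤ) (he : e ∈ ({(1, 0), (0, 1), (1, -1)} : Set (ℤ × ℤ)))
    (P : Set (ℤ × ℤ)) (hP : IsPortal R e P)
    (C : Set (ℤ × ℤ))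
    (hC : ∃ D : (triGrid.induce (R \ P)).ConnectedComponent, C = Subtype.val '' D.supp) :
    GeodesicallyConvex V (C ∪ P) := by
  obtain ⟨Q, rfl⟩ := hP
  obtain ⟨D, rfl⟩ := hC
  have hsub : Subtype.val '' D.supp ∪ Subtype.val '' Q.supp ⊆ R := by
    rintro _ (⟨x, -, rfl⟩ | ⟨x, -, rfl⟩)
    exacts [x.2.1, x.2]
  intro u v hu hv p hp w hw
  by_contra hwCP
  have hpR := hRconv u v (hsub hu) (hsub hv) p hp
  obtain ⟨p₁, p₂, rfl⟩ := Walk.mem_support_iff_exists_append.mp hw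
  obtain ⟨a, ha, a', haQ, ha'⟩ := Walk.exists_mem_support_of_exit D p₁
    (fun x hx => hpR x (by simp [hx])) hu hwCP
  obtain ⟨b, hb, b', hbQ, hb'⟩ := Walk.exists_mem_support_of_exit D p₂.reverse
    (fun x hx => hpR x (by simp_all)) hv hwCP
  obtain rfl : a = Set.inclusion hRV a' := Subtype.ext ha'.symm
  obtain rfl : b = Set.inclusion hRV b' := Subtype.ext hb'.symm
  obtain ⟨p₀, q₁, rfl⟩ := Walk.mem_support_iff_exists_append.mp ha
  obtain ⟨q₂, p₃, rfl⟩ := Walk.mem_support_iff_exists_append.mp (by simpa using hb)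
  obtain ⟨r, hr⟩ :=
    exists_walk_length_eq_of_portal_reachable hRV he (Q.reachable_of_mem_supp haQ hbQ)
  have hq := Walk.length_le_of_length_append_eq_dist p₀ (q₁.append q₂) r p₃
    (by simp only [Walk.length_append] at hp ⊢; omega)
  have hwQ : twiceGridDist a' w + twiceGridDist w b' ≤ twiceGridDist a' b' :=
    calc twiceGridDist a' w + twiceGridDist w b' ≤ 2 * q₁.length + 2 * q₂.length :=
          add_le_add (twiceGridDist_le_length q₁) (twiceGridDist_le_length q₂)
      _ ≤ 2 * r.length := by rw [Walk.length_append] at hq; omega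
      _ = twiceGridDist a' b' := hr
  exact hwCP (Or.inr ⟨⟨w, hpR w hw⟩, mem_supp_of_twiceGridDist_le he haQ hbQ hwQ, rfl⟩)

/-- Splitting a geodesically convex region at a portal yields geodesically
convex regions: if `R ⊆ V` is a connected, geodesically convex region, `P` a `q`-portal of
the subgraph induced on `R`, and `C` a connected component of the subgraph induced on
`R \ P`, then `C ∪ P` is geodesically convex in the subgraph induced on `V`. -/
theorem split_at_portal_convex (V : Set (ℤ × ℤ)) (hfin : V.Finite) (hne : V.Nonempty)
    (hconn : (triGrid.induce V).Connected)
    (R : Set (ℤ × ℤ)) (hRV : R ⊆ V) (hRconn : (triGrid.induce R).Connected)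
    (hRconv : GeodesicallyConvex V R)
    (e : ℤ × ℤ) (he : e ∈ ({(1, 0), (0, 1), (1, -1)} : Set (ℤ × ℤ)))
    (P : Set (ℤ × ℤ)) (hP : IsPortal R e P)
    (C : Set (ℤ × ℤ))
    (hC : ∃ D : (triGrid.induce (R \ P)).ConnectedComponent, C = Subtype.val '' D.supp) :
    GeodesicallyConvex V (C ∪ P) :=
  split_at_portal_convex_general V R hRV hRconv e he P hP C hC
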